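/- Let R be a commutative ring with unity and consider a commutative diagram of R-modules with exact rows: A1 → A2 → A3 → A4 → A5 (maps α1,...,α4) and B1 → B2 → B3 → B4 → B5 (maps β1,...,β4), with vertical maps f1,...,f5 making all squares commute. If f1 and f4 are isomorphisms and f5 is injective, then (B3, f3, β2) is the pushout of the pair of maps α2 : A2 → A3 and f2 : A2 → B2. -/

import Mathlib

/-!
The square `α2, f2, f3, β2` is a pushout exactly when `A2 → A3 × B2 → B3 → 0`, with maps
`(α2, -f2)` and `f3 + β2`, is exact. Both halves of this exactness are diagram chases in the
ladder: surjectivity of `f3 + β2` uses the right half (`f4` surjective, `f5` injective), and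
exactness at `A3 × B2` the left half (`f1` surjective, `f4` injective).
-/

open LinearMap

section Pushout

variable {R : Type*} [Ring R] {M N P : Type*}
  [AddCommGroup M] [Module R M] [AddCommGroup N] [Module R N] [AddCommGroup P] [Module R P]

theorem Function.Exact.existsUnique_comp_eq_of_surjective {g : M →ₗ[R] N} {p : N →ₗ[R] P}
    (h : Function.Exact g p) (hp : Function.Surjective p)
    {Y : Type*} [AddCommGroup Y] [Module R Y] (q : N →ₗ[R] Y) (hq : q ∘ₗ g = 0) :
    ∃! φ : P →ₗ[R] Y, φ ∘ₗ p = q := by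
  set φ := (range g).liftQ q (range_le_ker_iff.mpr hq) ∘ₗ
    (h.linearEquivOfSurjective hp).symm.toLinearMap
  have hφ : φ ∘ₗ p = q := by
    ext x
    simp [φ]
  exact ⟨φ, hφ, fun ψ hψ => (cancel_right hp).mp (hψ.trans hφ.symm)⟩

theorem existsUnique_of_exact_prod_neg_coprod {A B : Type*}
    [AddCommGroup A] [Module R A] [AddCommGroup B] [Module R B]
    {α : M →ₗ[R] A} {f : M →ₗ[R] B} {g : A →ₗ[R] P} {β : B →ₗ[R] P}
    (h : Function.Exact (α.prod (-f)) (g.coprod β)) (hs : Function.Surjective (g.coprod β))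
    {Y : Type*} [AddCommGroup Y] [Module R Y] (a : A →ₗ[R] Y) (b : B →ₗ[R] Y)
    (hab : a ∘ₗ α = b ∘ₗ f) :
    ∃! φ : P →ₗ[R] Y, φ ∘ₗ g = a ∧ φ ∘ₗ β = b := by
  have hq : a.coprod b ∘ₗ α.prod (-f) = 0 := by
    rw [coprod_comp_prod, comp_neg, hab, add_neg_cancel]
  have hcoprod (φ : P →ₗ[R] Y) : φ ∘ₗ g.coprod β = a.coprod b ↔ φ ∘ₗ g = a ∧ φ ∘ₗ β = b := by
    simp only [prod_ext_iff, comp_assoc, coprod_inl, coprod_inr]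
  simpa only [hcoprod] using h.existsUnique_comp_eq_of_surjective hs (a.coprod b) hq

end Pushout

section Ladder

variable {R : Type*} [Ring R] {A1 A2 A3 A4 A5 B1 B2 B3 B4 B5 : Type*}
  [AddCommGroup A1] [Module R A1] [AddCommGroup A2] [Module R A2]
  [AddCommGroup A3] [Module R A3] [AddCommGroup A4] [Module R A4]
  [AddCommGroup A5] [Module R A5]
  [AddCommGroup B1] [Module R B1] [AddCommGroup B2] [Module R B2]
  [AddCommGroup B3] [Module R B3] [AddCommGroup B4] [Module R B4]
  [AddCommGroup B5] [Module R B5]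
  {α1 : A1 →ₗ[R] A2} {α2 : A2 →ₗ[R] A3} {α3 : A3 →ₗ[R] A4} {α4 : A4 →ₗ[R] A5}
  {β1 : B1 →ₗ[R] B2} {β2 : B2 →ₗ[R] B3} {β3 : B3 →ₗ[R] B4} {β4 : B4 →ₗ[R] B5}
  {f1 : A1 →ₗ[R] B1} {f2 : A2 →ₗ[R] B2} {f3 : A3 →ₗ[R] B3}
  {f4 : A4 →ₗ[R] B4} {f5 : A5 →ₗ[R] B5}

theorem surjective_coprod_of_exact (hA34 : Function.Exact α3 α4)
    (hB23 : Function.Exact β2 β3) (hB34 : Function.Exact β3 β4)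
    (hsq3 : β3 ∘ₗ f3 = f4 ∘ₗ α3) (hsq4 : β4 ∘ₗ f4 = f5 ∘ₗ α4)
    (hf4 : Function.Surjective f4) (hf5 : Function.Injective f5) :
    Function.Surjective (f3.coprod β2) := by
  intro b3
  obtain ⟨a4, ha4⟩ := hf4 (β3 b3)
  obtain ⟨a3, rfl⟩ : a4 ∈ Set.range α3 := (hA34 a4).mp <| hf5 <| by
    rw [map_zero, ← comp_apply, ← hsq4, comp_apply, ha4, hB34.apply_apply_eq_zero]
  obtain ⟨b2, hb2⟩ : b3 - f3 a3 ∈ Set.range β2 := (hB23 _).mp <| by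
    rw [map_sub, sub_eq_zero, ← comp_apply β3, hsq3, comp_apply, ha4]
  exact ⟨(a3, b2), by simp [hb2]⟩

theorem exact_prod_neg_coprod_of_exact (hA12 : Function.Exact α1 α2)
    (hA23 : Function.Exact α2 α3) (hB12 : Function.Exact β1 β2) (hB23 : Function.Exact β2 β3)
    (hsq1 : β1 ∘ₗ f1 = f2 ∘ₗ α1) (hsq2 : β2 ∘ₗ f2 = f3 ∘ₗ α2) (hsq3 : β3 ∘ₗ f3 = f4 ∘ₗ α3)
    (hf1 : Function.Surjective f1) (hf4 : Function.Injective f4) :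
    Function.Exact (α2.prod (-f2)) (f3.coprod β2) := by
  refine exact_of_comp_eq_zero_of_ker_le_range ?_ ?_
  · rw [coprod_comp_prod, comp_neg, hsq2, add_neg_cancel]
  rintro ⟨x, y⟩ (hxy : f3 x + β2 y = 0)
  obtain ⟨a2, rfl⟩ : x ∈ Set.range α2 := (hA23 x).mp <| hf4 <| by
    rw [map_zero, ← comp_apply f4, ← hsq3, comp_apply, eq_neg_of_add_eq_zero_left hxy, map_neg,
      hB23.apply_apply_eq_zero, neg_zero]
  obtain ⟨b1, hb1⟩ : y + f2 a2 ∈ Set.range β1 := (hB12 _).mp <| by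
    rw [map_add, ← comp_apply β2 f2, hsq2, comp_apply, add_comm, hxy]
  obtain ⟨a1, rfl⟩ := hf1 b1
  have hy : y = f2 (α1 a1 - a2) := by
    rw [map_sub, ← comp_apply f2, ← hsq1, comp_apply, hb1, add_sub_cancel_right]
  refine ⟨a2 - α1 a1, ?_⟩
  simp [hy, hA12.apply_apply_eq_zero]

end Ladder

/-- Five lemma type pushout lemma: in a commutative ladder of `R`-modules with exact rows,
if `f1` and `f4` are isomorphisms and `f5` is injective, then `(B3, f3, β2)` is the pushout
of `α2 : A2 → A3` and `f2 : A2 → B2`. -/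
theorem stmt0 {R : Type*} [CommRing R]
    {A1 A2 A3 A4 A5 B1 B2 B3 B4 B5 : Type*}
    [AddCommGroup A1] [Module R A1] [AddCommGroup A2] [Module R A2]
    [AddCommGroup A3] [Module R A3] [AddCommGroup A4] [Module R A4]
    [AddCommGroup A5] [Module R A5]
    [AddCommGroup B1] [Module R B1] [AddCommGroup B2] [Module R B2]
    [AddCommGroup B3] [Module R B3] [AddCommGroup B4] [Module R B4]
    [AddCommGroup B5] [Module R B5]
    (α1 : A1 →ₗ[R] A2) (α2 : A2 →ₗ[R] A3) (α3 : A3 →ₗ[R] A4) (α4 : A4 →ₗ[R] A5)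
    (β1 : B1 →ₗ[R] B2) (β2 : B2 →ₗ[R] B3) (β3 : B3 →ₗ[R] B4) (β4 : B4 →ₗ[R] B5)
    (f1 : A1 →ₗ[R] B1) (f2 : A2 →ₗ[R] B2) (f3 : A3 →ₗ[R] B3)
    (f4 : A4 →ₗ[R] B4) (f5 : A5 →ₗ[R] B5)
    (hA12 : Function.Exact α1 α2) (hA23 : Function.Exact α2 α3)
    (hA34 : Function.Exact α3 α4)
    (hB12 : Function.Exact β1 β2) (hB23 : Function.Exact β2 β3)
    (hB34 : Function.Exact β3 β4)
    (hsq1 : β1 ∘ₗ f1 = f2 ∘ₗ α1) (hsq2 : β2 ∘ₗ f2 = f3 ∘ₗ α2)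
    (hsq3 : β3 ∘ₗ f3 = f4 ∘ₗ α3) (hsq4 : β4 ∘ₗ f4 = f5 ∘ₗ α4)
    (hf1 : Function.Bijective f1) (hf4 : Function.Bijective f4)
    (hf5 : Function.Injective f5) :
    f3 ∘ₗ α2 = β2 ∘ₗ f2 ∧
    ∀ (Y : Type*) [AddCommGroup Y] [Module R Y] (a : A3 →ₗ[R] Y) (b : B2 →ₗ[R] Y),
      a ∘ₗ α2 = b ∘ₗ f2 →
      ∃! φ : B3 →ₗ[R] Y, φ ∘ₗ f3 = a ∧ φ ∘ₗ β2 = b :=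
  ⟨hsq2.symm, fun _ _ _ a b hab =>
    existsUnique_of_exact_prod_neg_coprod
      (exact_prod_neg_coprod_of_exact hA12 hA23 hB12 hB23 hsq1 hsq2 hsq3 hf1.2 hf4.1)
      (surjective_coprod_of_exact hA34 hB23 hB34 hsq3 hsq4 hf4.2 hf5) a b hab⟩
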